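/- Let R be a prism over a flat polygon P. If P is locally Rupert, then R is locally reverse Rupert. -/

import Mathlib

/-!
Let `ρ` be a small rotation with `π(ρ P) ⊆ int π(P)` and `σ = ρ⁻¹`; since `π(R) = π(P)`, it
suffices to find an open set between `π(P)` and `π(σ R)`. Take the points `q` of the xy-plane such
that `ρ q` projects into `int π(P)` and has height `< h`. Such a `ρ q` lies in `R` because `P` is
flat, so `q = σ(ρ q) ∈ σ R`. Every point of `P` is such a `q`, because `ρ` is uniformly close to
the identity on the compact set `P`.
-/

open Matrix

/-- Rotation by angle `θ` about the unit axis `a` (Rodrigues' formula). -/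
noncomputable def rot3 (a : Fin 3 → ℝ) (θ : ℝ) (x : Fin 3 → ℝ) : Fin 3 → ℝ :=
  Real.cos θ • x + Real.sin θ • (crossProduct a x) + ((1 - Real.cos θ) * (a ⬝ᵥ x)) • a

/-- Orthogonal projection onto the xy-plane, viewed as a map to `ℝ²`. -/
def proj2 (x : Fin 3 → ℝ) : Fin 2 → ℝ := ![x 0, x 1]

/-- Orthogonal projection `(x,y,z) ↦ (x,y,0)` of `ℝ³` onto the xy-plane. -/
def proj3 (x : Fin 3 → ℝ) : Fin 3 → ℝ := ![x 0, x 1, 0]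

/-- `X ⊆ ℝ³` is locally Rupert: Rupert rotations of arbitrarily small angle exist. -/
noncomputable def IsLocallyRupert (X : Set (Fin 3 → ℝ)) : Prop :=
  ∀ ε > 0, ∃ (a : Fin 3 → ℝ) (θ : ℝ), a ⬝ᵥ a = 1 ∧ |θ| < ε ∧
    proj2 '' (rot3 a θ '' X) ⊆ interior (proj2 '' X)

/-- `X ⊆ ℝ³` is locally reverse Rupert. -/
noncomputable def IsLocallyReverseRupert (X : Set (Fin 3 → ℝ)) : Prop :=
  ∀ ε > 0, ∃ (a : Fin 3 → ℝ) (θ : ℝ), a ⬝ᵥ a = 1 ∧ |θ| < ε ∧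
    proj2 '' X ⊆ interior (proj2 '' (rot3 a θ '' X))

open Set Filter Topology

theorem rot3_neg_rot3 {a : Fin 3 → ℝ} (ha : a ⬝ᵥ a = 1) (θ : ℝ) (x : Fin 3 → ℝ) :
    rot3 a (-θ) (rot3 a θ x) = x := by
  simp only [rot3, map_add, map_smul, cross_self, cross_cross_eq_smul_sub_smul', dotProduct_add,
    dotProduct_smul, dot_self_cross, ha, Real.cos_neg, Real.sin_neg, smul_eq_mul, smul_zero,
    add_zero, mul_zero]
  linear_combination (norm := module) (Real.sin_sq_add_cos_sq θ) • (x - (a ⬝ᵥ x) • a)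

@[fun_prop]
theorem Continuous.rot3 {α : Type*} [TopologicalSpace α] {a x : α → Fin 3 → ℝ} {θ : α → ℝ}
    (ha : Continuous a) (hθ : Continuous θ) (hx : Continuous x) :
    Continuous fun t => rot3 (a t) (θ t) (x t) := by
  unfold _root_.rot3
  simp_rw [cross_apply]
  fun_prop

theorem rot3_zero (a x : Fin 3 → ℝ) : rot3 a 0 x = x := by
  simp [rot3]

theorem norm_le_one_of_dotProduct_self_eq_one {ι : Type*} [Fintype ι] {v : ι → ℝ}
    (hv : v ⬝ᵥ v = 1) : ‖v‖ ≤ 1 := by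
  refine (pi_norm_le_iff_of_nonneg zero_le_one).2 fun i => ?_
  rw [Real.norm_eq_abs, ← sq_le_one_iff_abs_le_one, sq, ← hv]
  exact Finset.single_le_sum (fun j _ => mul_self_nonneg (v j)) (Finset.mem_univ i)

theorem isCompact_dotProduct_self_eq_one {ι : Type*} [Fintype ι] :
    IsCompact {v : ι → ℝ | v ⬝ᵥ v = 1} :=
  Metric.isCompact_of_isClosed_isBounded (isClosed_eq (by fun_prop) continuous_const)
    ((Metric.isBounded_closedBall (x := 0) (r := 1)).subset fun _ hv =>
      mem_closedBall_zero_iff.2 (norm_le_one_of_dotProduct_self_eq_one hv))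

theorem eventually_forall_dist_rot3_lt {K : Set (Fin 3 → ℝ)} (hK : IsCompact K) {r : ℝ}
    (hr : 0 < r) : ∀ᶠ θ in 𝓝 0, ∀ a, a ⬝ᵥ a = 1 → ∀ x ∈ K, dist (rot3 a θ x) x < r := by
  have hcont : Continuous fun q : ℝ × (Fin 3 → ℝ) × (Fin 3 → ℝ) =>
      dist (rot3 q.2.1 q.1 q.2.2) q.2.2 := by fun_prop
  have key := (isCompact_dotProduct_self_eq_one.prod hK).eventually_forall_of_forall_eventually
    (x₀ := (0 : ℝ)) (P := fun θ p => dist (rot3 p.1 θ p.2) p.2 < r) fun p _ =>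
      hcont.continuousAt.eventually_lt continuousAt_const (by simpa [rot3_zero] using hr)
  exact key.mono fun θ hθ a ha x hx => hθ (a, x) ⟨ha, hx⟩

def liftXY (q : Fin 2 → ℝ) : Fin 3 → ℝ := ![q 0, q 1, 0]

theorem continuous_proj2 : Continuous proj2 := by
  unfold proj2
  fun_prop

theorem continuous_liftXY : Continuous liftXY := by
  unfold liftXY
  fun_prop

theorem proj2_liftXY (q : Fin 2 → ℝ) : proj2 (liftXY q) = q := by
  ext i
  fin_cases i <;> rfl

theorem liftXY_proj2 {x : Fin 3 → ℝ} (hx : x 2 = 0) : liftXY (proj2 x) = x := by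
  ext i
  fin_cases i
  · rfl
  · rfl
  · exact hx.symm

def prism (P : Set (Fin 3 → ℝ)) (h : ℝ) : Set (Fin 3 → ℝ) :=
  {x | proj3 x ∈ P ∧ -h ≤ x 2 ∧ x 2 ≤ h}

section Prism

variable {P : Set (Fin 3 → ℝ)} {h : ℝ}

theorem proj2_image_prism_subset : proj2 '' prism P h ⊆ proj2 '' P :=
  fun _ ⟨x, hx, hq⟩ => ⟨proj3 x, hx.1, hq⟩

theorem mem_prism_of_proj2_mem (hP : ∀ x ∈ P, x 2 = 0) {y : Fin 3 → ℝ}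
    (hy : proj2 y ∈ proj2 '' P) (hyh : |y 2| ≤ h) : y ∈ prism P h := by
  obtain ⟨x, hx, hxy⟩ := hy
  have hproj3 : proj3 y = x := by
    rw [← liftXY_proj2 (hP x hx), hxy]
    rfl
  exact ⟨hproj3 ▸ hx, abs_le.1 hyh⟩

theorem proj2_image_prism_subset_interior (hP : ∀ x ∈ P, x 2 = 0)
    {ρ σ : (Fin 3 → ℝ) → Fin 3 → ℝ} (hρ : Continuous ρ) (hσρ : Function.LeftInverse σ ρ)
    (hshadow : proj2 '' (ρ '' P) ⊆ interior (proj2 '' P)) (hslab : ∀ x ∈ P, |ρ x 2| < h) :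
    proj2 '' prism P h ⊆ interior (proj2 '' (σ '' prism P h)) := by
  set U : Set (Fin 3 → ℝ) := {y | proj2 y ∈ interior (proj2 '' P) ∧ |y 2| < h}
  have hU : IsOpen U :=
    (isOpen_interior.preimage continuous_proj2).inter
      (isOpen_lt (continuous_apply 2).abs continuous_const)
  set S := liftXY ⁻¹' (ρ ⁻¹' U)
  have hPS : proj2 '' P ⊆ S := by
    rintro _ ⟨x, hx, rfl⟩
    rw [mem_preimage, liftXY_proj2 (hP x hx)]
    exact ⟨hshadow ⟨ρ x, mem_image_of_mem ρ hx, rfl⟩, hslab x hx⟩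
  have hSσR : S ⊆ proj2 '' (σ '' prism P h) := by
    intro q ⟨hq, hqh⟩
    have hmem : ρ (liftXY q) ∈ prism P h := mem_prism_of_proj2_mem hP (interior_subset hq) hqh.le
    exact ⟨liftXY q, ⟨ρ (liftXY q), hmem, hσρ _⟩, proj2_liftXY q⟩
  exact proj2_image_prism_subset.trans <|
    hPS.trans (interior_maximal hSσR ((hU.preimage hρ).preimage continuous_liftXY))

end Prism

/-- if `P` is a locally Rupert flat polygon, then the prism `R` over
`P` is locally reverse Rupert. -/
theorem prism_over_locally_rupert (V : Finset (Fin 3 → ℝ))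
    (P R : Set (Fin 3 → ℝ)) (h : ℝ) (hh : 0 < h)
    -- P is a flat (convex) polygon in the xy-plane:
    (hVflat : ∀ x ∈ V, x 2 = 0)
    (hP : P = convexHull ℝ (V : Set (Fin 3 → ℝ)))
    -- R is the prism over P of height h:
    (hR : R = {x : Fin 3 → ℝ | proj3 x ∈ P ∧ -h ≤ x 2 ∧ x 2 ≤ h})
    (hPr : IsLocallyRupert P) :
    IsLocallyReverseRupert R := by
  subst hP hR
  have hflat : ∀ x ∈ convexHull ℝ (V : Set (Fin 3 → ℝ)), x 2 = 0 :=
    convexHull_min hVflat (convex_hyperplane (𝕜 := ℝ) (f := fun x : Fin 3 → ℝ => x 2)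
      (LinearMap.proj 2).isLinear 0)
  obtain ⟨δ, hδ, hsmall⟩ := Metric.eventually_nhds_iff.1
    (eventually_forall_dist_rot3_lt (V.finite_toSet.isCompact_convexHull (𝕜 := ℝ)) hh)
  intro ε hε
  obtain ⟨a, θ, ha, hθ, hshadow⟩ := hPr (min ε δ) (lt_min hε hδ)
  refine ⟨a, -θ, ha, by rw [abs_neg]; exact hθ.trans_le (min_le_left _ _), ?_⟩
  refine proj2_image_prism_subset_interior hflat (by fun_prop)
    (rot3_neg_rot3 ha θ) hshadow fun x hx => ?_
  calc |rot3 a θ x 2| = dist (rot3 a θ x 2) (x 2) := by rw [hflat x hx, Real.dist_0_eq_abs]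
    _ ≤ dist (rot3 a θ x) x := dist_le_pi_dist _ _ 2
    _ < h := hsmall (by rw [Real.dist_0_eq_abs]; exact hθ.trans_le (min_le_right _ _)) a ha x hx
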